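/- In odd-even transposition sort on an array of length N, each full round (one even-phase pass followed by one odd-phase pass) does not increase the number of inversions, and after N-1 rounds the array is sorted in ascending order. -/

import Mathlib

/-!
Fix a threshold `v` and let `c_j` count the entries `≥ v` at positions `≥ j`. A phase leaves `c_j`
unchanged when no comparator straddles the cut before position `j`; otherwise it raises `c_j` to at
least `min (c_{j+1} + 1) (c_{j-1})`. The function `min (min m (N - j)) (⌈m/2⌉ + ⌊(t - j)/2⌋)`, with
`m = c_0`, obeys the same recurrence in `t` and starts below `c_j` (because `c_j ≥ m - j`), so it
stays below `c_j` after `t` phases. For `t ≥ N` it equals `min m (N - j)`, the largest value `c_j`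
can take, whereas an inversion `B a > B b` makes `c_b` smaller than that at the threshold `v = B a`.
So `N` phases sort, and `N - 1` rounds are `2 (N - 1) ≥ N` phases.
-/

/-- One phase of odd-even transposition sort: simultaneously swap each
adjacent pair `(A i, A (i+1))` with `i % 2 = r % 2` and `A i > A (i+1)`. -/
def phase (r : ℕ) {N : ℕ} (A : Fin N → ℤ) : Fin N → ℤ := fun i =>
  if i.val % 2 = r % 2 then
    if h : i.val + 1 < N then
      if A i > A ⟨i.val + 1, h⟩ then A ⟨i.val + 1, h⟩ else A i
    else A i
  else
    if h : 1 ≤ i.val then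
      if A ⟨i.val - 1, by omega⟩ > A i then A ⟨i.val - 1, by omega⟩ else A i
    else A i

open Finset

section

variable {N : ℕ}

def phaseSource (r : ℕ) (B : Fin N → ℤ) (i : Fin N) : Fin N :=
  if i.val % 2 = r % 2 then
    if h : i.val + 1 < N then
      if B i > B ⟨i.val + 1, h⟩ then ⟨i.val + 1, h⟩ else i
    else i
  else
    if h : 1 ≤ i.val then
      if B ⟨i.val - 1, by omega⟩ > B i then ⟨i.val - 1, by omega⟩ else i
    else i

theorem phase_apply_eq_phaseSource (r : ℕ) (B : Fin N → ℤ) (i : Fin N) :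
    phase r B i = B (phaseSource r B i) := by
  unfold phase phaseSource
  split_ifs <;> rfl

theorem phaseSource_involutive (r : ℕ) (B : Fin N → ℤ) :
    Function.Involutive (phaseSource r B) := by
  intro i
  unfold phaseSource
  split_ifs <;> simp_all [Fin.ext_iff] <;> omega

theorem le_phaseSource {r j : ℕ} (B : Fin N → ℤ) (hj : j = 0 ∨ j % 2 = r % 2) {i : Fin N}
    (hi : j ≤ i.val) : j ≤ (phaseSource r B i).val := by
  unfold phaseSource
  split_ifs <;> (try simp only) <;> omega

theorem map_phase_univ (r : ℕ) (B : Fin N → ℤ) :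
    univ.val.map (phase r B) = univ.val.map B := by
  have h : phase r B = B ∘ (phaseSource_involutive r B).toPerm :=
    funext (phase_apply_eq_phaseSource r B)
  rw [h, ← Multiset.map_map, Multiset.map_univ_val_equiv]

theorem phase_mod_two (r : ℕ) : phase (N := N) (r % 2) = phase r := by
  funext B i
  simp only [phase, Nat.mod_mod]

theorem phase_apply_succ {r j : ℕ} (B : Fin N → ℤ) (hr : j % 2 = r % 2) (hj : j + 1 < N) :
    phase r B ⟨j + 1, hj⟩ = max (B ⟨j, by omega⟩) (B ⟨j + 1, hj⟩) := by
  have hr' : (j + 1) % 2 ≠ r % 2 := by omega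
  simp only [phase, if_neg hr', dif_pos (Nat.le_add_left 1 j), Nat.add_sub_cancel, max_def]
  split_ifs <;> omega

def runPhases (A : Fin N → ℤ) : ℕ → Fin N → ℤ
  | 0 => A
  | t + 1 => phase t (runPhases A t)

theorem runPhases_two_mul (A : Fin N → ℤ) (n : ℕ) :
    runPhases A (2 * n) = (fun B => phase 1 (phase 0 B))^[n] A := by
  induction n with
  | zero => rfl
  | succ n ih =>
    rw [Function.iterate_succ_apply', ← ih, show 2 * (n + 1) = 2 * n + 1 + 1 by ring]
    simp only [runPhases]
    rw [← phase_mod_two (2 * n + 1), ← phase_mod_two (2 * n)]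
    simp [Nat.mul_mod_right, Nat.add_mod]

theorem map_runPhases_univ (A : Fin N → ℤ) (t : ℕ) :
    univ.val.map (runPhases A t) = univ.val.map A := by
  induction t with
  | zero => rfl
  | succ t ih => rw [runPhases, map_phase_univ, ih]

def tailCount (v : ℤ) (B : Fin N → ℤ) (j : ℕ) : ℕ := #{i : Fin N | j ≤ i.val ∧ v ≤ B i}

theorem tailCount_eq_add (v : ℤ) (B : Fin N → ℤ) {j : ℕ} (hj : j < N) :
    tailCount v B j = (if v ≤ B ⟨j, hj⟩ then 1 else 0) + tailCount v B (j + 1) := by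
  have hsplit : univ.filter (fun i : Fin N => j ≤ i.val ∧ v ≤ B i) =
      univ.filter (fun i => i = ⟨j, hj⟩ ∧ v ≤ B i) ∪
        univ.filter (fun i => j + 1 ≤ i.val ∧ v ≤ B i) := by
    ext i
    simp only [mem_filter, mem_univ, true_and, mem_union, Fin.ext_iff]
    constructor
    · rintro ⟨h, hv⟩
      omega
    · rintro (⟨h, hv⟩ | ⟨h, hv⟩) <;> exact ⟨by omega, hv⟩
  rw [tailCount, hsplit, card_union_of_disjoint]
  · split_ifs with hv
    · rw [show univ.filter (fun i => i = ⟨j, hj⟩ ∧ v ≤ B i) = {⟨j, hj⟩} by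
        ext i; simp only [mem_filter, mem_univ, true_and, mem_singleton, and_iff_left_iff_imp]
        rintro rfl; exact hv]
      rfl
    · rw [show univ.filter (fun i => i = ⟨j, hj⟩ ∧ v ≤ B i) = ∅ by
        ext i; simp only [mem_filter, mem_univ, true_and, notMem_empty, iff_false, not_and]
        rintro rfl; exact hv]
      rfl
  · rw [disjoint_filter]
    rintro i - ⟨rfl, -⟩ ⟨h, -⟩
    simp at h

theorem tailCount_le_succ (v : ℤ) (B : Fin N → ℤ) (j : ℕ) :
    tailCount v B j ≤ tailCount v B (j + 1) + 1 := by
  by_cases hj : j < N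
  · rw [tailCount_eq_add v B hj]
    split_ifs <;> omega
  · have : tailCount v B j = 0 := by
      rw [tailCount, card_eq_zero, filter_eq_empty_iff]
      intro i _ h
      omega
    omega

theorem tailCount_zero_le (v : ℤ) (B : Fin N → ℤ) (j : ℕ) :
    tailCount v B 0 ≤ j + tailCount v B j := by
  induction j with
  | zero => omega
  | succ j ih => have := tailCount_le_succ v B j; omega

theorem tailCount_phase {r j : ℕ} (v : ℤ) (B : Fin N → ℤ) (hj : j = 0 ∨ j % 2 = r % 2) :
    tailCount v (phase r B) j = tailCount v B j := by
  have hσ := phaseSource_involutive r B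
  refine card_nbij' (phaseSource r B) (phaseSource r B) ?_ ?_ (fun i _ => hσ i) (fun i _ => hσ i)
  · intro i hi
    simp only [mem_coe, mem_filter, mem_univ, true_and, phase_apply_eq_phaseSource] at hi ⊢
    exact ⟨le_phaseSource B hj hi.1, hi.2⟩
  · intro i hi
    simp only [mem_coe, mem_filter, mem_univ, true_and, phase_apply_eq_phaseSource, hσ i] at hi ⊢
    exact ⟨le_phaseSource B hj hi.1, hi.2⟩

theorem tailCount_runPhases_zero (v : ℤ) (A : Fin N → ℤ) (t : ℕ) :
    tailCount v (runPhases A t) 0 = tailCount v A 0 := by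
  induction t with
  | zero => rfl
  | succ t ih => rw [runPhases, tailCount_phase v _ (Or.inl rfl), ih]

theorem min_le_tailCount_phase {r j : ℕ} (v : ℤ) (B : Fin N → ℤ) (hr : j % 2 = r % 2)
    (hj : j + 1 < N) :
    min (tailCount v B (j + 2) + 1) (tailCount v B j) ≤ tailCount v (phase r B) (j + 1) := by
  rw [tailCount_eq_add v (phase r B) hj, phase_apply_succ B hr hj,
    tailCount_phase v B (Or.inr (show (j + 2) % 2 = r % 2 by omega)),
    tailCount_eq_add v B (show j < N by omega), tailCount_eq_add v B hj]
  have hsucc : tailCount v B (j + 1 + 1) = tailCount v B (j + 2) := rfl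
  simp only [le_max_iff]
  split_ifs <;> omega

theorem tailCount_lt_min_of_lt {v : ℤ} {B : Fin N → ℤ} {a b : Fin N} (hab : a < b) (ha : v ≤ B a)
    (hb : B b < v) : tailCount v B b < min (tailCount v B 0) (N - b) := by
  refine lt_min (card_lt_card ?_) ?_
  · rw [ssubset_iff_of_subset (fun i hi => by simp_all)]
    exact ⟨a, by simp [ha], by simp [not_le.mpr hab]⟩
  · calc tailCount v B b ≤ #(Ioi b) := by
          refine card_le_card fun i hi => ?_
          simp only [mem_filter, mem_univ, true_and] at hi
          exact mem_Ioi.mpr (lt_of_le_of_ne hi.1 fun h => by cases h; omega)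
      _ < N - b := by rw [Fin.card_Ioi]; omega

-- `/` on `ℤ` rounds down, also when `t < j`; so `(m + 1) / 2 = ⌈m/2⌉`.
theorem min_le_tailCount_runPhases (v : ℤ) (A : Fin N → ℤ) (t j : ℕ) :
    min (min (tailCount v A 0 : ℤ) (N - j)) ((tailCount v A 0 + 1) / 2 + ((t : ℤ) - j) / 2) ≤
      tailCount v (runPhases A t) j := by
  induction t generalizing j with
  | zero => have := tailCount_zero_le v A j; simp only [runPhases]; omega
  | succ t ih =>
    rcases j with _ | k
    · rw [tailCount_runPhases_zero]; omega
    by_cases hpar : (k + 1) % 2 = t % 2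
    · rw [runPhases, tailCount_phase v _ (Or.inr hpar)]
      have hsame := ih (k + 1)
      omega
    by_cases hk : k + 1 < N
    · have hstep := min_le_tailCount_phase v (runPhases A t) (show k % 2 = t % 2 by omega) hk
      have hright := ih (k + 2)
      have hleft := ih k
      rw [runPhases]
      omega
    · omega

theorem monotone_runPhases (A : Fin N → ℤ) {t : ℕ} (ht : N ≤ t) : Monotone (runPhases A t) := by
  intro a b hab
  refine le_of_not_gt fun hba => ?_
  have hlt : a < b := lt_of_le_of_ne hab (by rintro rfl; exact lt_irrefl _ hba)
  have hupper := tailCount_lt_min_of_lt hlt le_rfl hba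
  have hlower := min_le_tailCount_runPhases (runPhases A t a) A t b
  rw [tailCount_runPhases_zero] at hupper
  omega

end

theorem odd_even_transposition_sorts {N : ℕ} (A : Fin N → ℤ) :
    Monotone ((fun B => phase 1 (phase 0 B))^[N - 1] A) ∧
      Multiset.map ((fun B => phase 1 (phase 0 B))^[N - 1] A) Finset.univ.val =
        Multiset.map A Finset.univ.val := by
  rw [← runPhases_two_mul]
  refine ⟨?_, map_runPhases_univ A _⟩
  rcases le_or_gt N 1 with hN | hN
  · intro a b _
    rw [show a = b from Fin.ext (by omega)]
  · exact monotone_runPhases A (by omega)
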